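/- Suppose there exists a constant D > 0 such that h < D and D·b(t+h)² ≤ Q(t) for all t ≥ t₀. Define V(t) := A(t)² − D ∫_{t−h}^{t} b(s+h)² x(s)² ds. Then along any solution x of the delay differential equation, V is differentiable on [t₀,∞) and V′(t) ≥ Q(t)·V(t) for all t ≥ t₀. -/

import Mathlib

/-!
Differentiating under the sliding window gives `A' = Q x`, so
`V' - Q V = (Q - D b(t+h)²) x(t)² + D b(t)² x(t-h)² + Q (D J - I²)`, where `I` and `J` are the
window integrals of `b(s+h) x(s)` and of its square. The first term is nonnegative by hypothesis,
and so is the last, since `Q ≥ D b(t+h)² ≥ 0` and Cauchy–Schwarz on a window of length `h < D`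
gives `I² ≤ h J ≤ D J`.
-/

open MeasureTheory Set

theorem sq_intervalIntegral_le_mul {f : ℝ → ℝ} {u v : ℝ} (huv : u ≤ v)
    (hf : IntervalIntegrable f volume u v)
    (hf2 : IntervalIntegrable (fun s => f s ^ 2) volume u v) :
    (∫ s in u..v, f s) ^ 2 ≤ (v - u) * ∫ s in u..v, f s ^ 2 := by
  rcases huv.eq_or_lt with rfl | hlt
  · simp
  have jensen := even_two.convexOn_pow.map_set_average_le (continuous_pow 2).continuousOn
    isClosed_univ (μ := volume) (t := Ioc u v) (f := f) (by simp [hlt]) (by simp)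
    (.of_forall fun s => mem_univ _) hf.1 hf2.1
  simp only [setAverage_eq, Real.volume_real_Ioc_of_le huv, smul_eq_mul,
    ← intervalIntegral.integral_of_le huv] at jensen
  field_simp at jensen
  exact jensen

section Window

variable {E : Type*} [NormedAddCommGroup E] [NormedSpace ℝ E] [CompleteSpace E]

theorem Continuous.hasDerivAt_integral_window {g : ℝ → E} (hg : Continuous g) (h t : ℝ) :
    HasDerivAt (fun u => ∫ s in (u - h)..u, g s) (g t - g (t - h)) t := by
  have hG (u : ℝ) := (hg.integral_hasStrictDerivAt 0 u).hasDerivAt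
  convert (hG t).sub (hG (t - h)).comp_sub_const using 1
  funext u
  exact (intervalIntegral.integral_interval_sub_left (hg.intervalIntegrable _ _)
    (hg.intervalIntegrable _ _)).symm

theorem ContinuousOn.hasDerivWithinAt_integral_window {g : ℝ → E} {a h t : ℝ} (hh : 0 ≤ h)
    (hg : ContinuousOn g (Ici (a - h))) (ht : a ≤ t) :
    HasDerivWithinAt (fun u => ∫ s in (u - h)..u, g s) (g t - g (t - h)) (Ici a) t := by
  set G : ℝ → E := fun s => g (max s (a - h))
  have hGc : Continuous G :=
    hg.comp_continuous (continuous_id.max continuous_const) fun s => mem_Ici.2 (le_max_right _ _)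
  have hGg {s : ℝ} (hs : a - h ≤ s) : G s = g s := by simp only [G, max_eq_left hs]
  have hwindow {u : ℝ} (hu : a ≤ u) : ∫ s in (u - h)..u, G s = ∫ s in (u - h)..u, g s := by
    refine intervalIntegral.integral_congr fun s hs => hGg ?_
    rw [uIcc_of_le (by linarith)] at hs
    linarith [hs.1]
  rw [← hGg (by linarith), ← hGg (by linarith)]
  exact (hGc.hasDerivAt_integral_window h t).hasDerivWithinAt.congr (fun u hu => (hwindow hu).symm)
    (hwindow ht).symm

end Window

theorem hasDerivWithinAt_add_integral_window {a b x : ℝ → ℝ} {t0 h t : ℝ} (hh : 0 ≤ h)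
    (hb : Continuous b) (hxc : ContinuousOn x (Ici (t0 - h)))
    (hx : HasDerivWithinAt x (a t * x t + b t * x (t - h)) (Ici t0) t) (ht : t0 ≤ t) :
    HasDerivWithinAt (fun u => x u + ∫ s in (u - h)..u, b (s + h) * x s)
      ((a t + b (t + h)) * x t) (Ici t0) t := by
  have hbx : ContinuousOn (fun s => b (s + h) * x s) (Ici (t0 - h)) := by fun_prop
  have hwindow := hbx.hasDerivWithinAt_integral_window hh ht
  refine (hx.add hwindow).congr_deriv ?_
  rw [sub_add_cancel]
  ring

theorem stmt18_general (t0 h D : ℝ) (hh : 0 < h) (hhD : h < D)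
    (a b x : ℝ → ℝ) (hb : Continuous b)
    -- x is a solution of the delay differential equation
    (hxc : ContinuousOn x (Set.Ici (t0 - h)))
    (hx : ∀ t, t0 ≤ t → HasDerivWithinAt x (a t * x t + b t * x (t - h)) (Set.Ici t0) t)
    -- the auxiliary functions Q, A, V
    (Q A V : ℝ → ℝ)
    (hQ : ∀ t, Q t = a t + b (t + h))
    (hA : ∀ t, A t = x t + ∫ s in (t - h)..t, b (s + h) * x s)
    (hV : ∀ t, V t = (A t) ^ 2 - D * ∫ s in (t - h)..t, (b (s + h)) ^ 2 * (x s) ^ 2)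
    -- the condition D·b(t+h)² ≤ Q(t)
    (hcond : ∀ t, t0 ≤ t → D * (b (t + h)) ^ 2 ≤ Q t) :
    ∀ t, t0 ≤ t → ∃ d, HasDerivWithinAt V d (Set.Ici t0) t ∧ Q t * V t ≤ d := by
  intro t ht
  have hD : 0 < D := hh.trans hhD
  have hbx : ContinuousOn (fun s => b (s + h) * x s) (Ici (t0 - h)) := by fun_prop
  have hbx2 : ContinuousOn (fun s => b (s + h) ^ 2 * x s ^ 2) (Ici (t0 - h)) := by fun_prop
  have hVA : V = (fun t => x t + ∫ s in (t - h)..t, b (s + h) * x s) ^ 2 -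
      fun t => D * ∫ s in (t - h)..t, b (s + h) ^ 2 * x s ^ 2 := funext fun t => by simp [hV, hA]
  refine ⟨_, hVA ▸ ((hasDerivWithinAt_add_integral_window hh.le hb hxc (hx t ht) ht).pow 2).sub
    ((hbx2.hasDerivWithinAt_integral_window hh.le ht).const_mul D), ?_⟩
  have hwindow : uIcc (t - h) t ⊆ Ici (t0 - h) := by
    rw [uIcc_of_le (by linarith)]
    exact Icc_subset_Ici_iff (by linarith) |>.2 (by linarith)
  have hCS := sq_intervalIntegral_le_mul (by linarith)
    ((hbx.mono hwindow).intervalIntegrable) (((hbx.pow 2).mono hwindow).intervalIntegrable)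
  simp only [sub_sub_cancel, mul_pow] at hCS
  have hcond_t : D * b (t + h) ^ 2 ≤ a t + b (t + h) := hQ t ▸ hcond t ht
  rw [hV, hA, hQ, sub_add_cancel, Nat.cast_ofNat, Nat.add_one_sub_one, pow_one]
  set I := ∫ s in (t - h)..t, b (s + h) * x s
  set J := ∫ s in (t - h)..t, b (s + h) ^ 2 * x s ^ 2
  have hJ : 0 ≤ J := intervalIntegral.integral_nonneg (by linarith) fun s _ => by positivity
  have hIJ : I ^ 2 ≤ D * J := hCS.trans (mul_le_mul_of_nonneg_right hhD.le hJ)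
  have hQ_nonneg : 0 ≤ a t + b (t + h) := (by positivity : 0 ≤ D * b (t + h) ^ 2).trans hcond_t
  nlinarith [mul_nonneg (sub_nonneg.2 hcond_t) (sq_nonneg (x t)),
    mul_nonneg hD.le (sq_nonneg (b t * x (t - h))), mul_nonneg hQ_nonneg (sub_nonneg.2 hIJ)]

theorem stmt18 (t0 h D : ℝ) (hh : 0 < h) (hD : 0 < D) (hhD : h < D)
    (a b x : ℝ → ℝ) (ha : Continuous a) (hb : Continuous b)
    -- x is a solution of the delay differential equation
    (hxc : ContinuousOn x (Set.Ici (t0 - h)))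
    (hx : ∀ t, t0 ≤ t → HasDerivWithinAt x (a t * x t + b t * x (t - h)) (Set.Ici t0) t)
    -- the auxiliary functions Q, A, V
    (Q A V : ℝ → ℝ)
    (hQ : ∀ t, Q t = a t + b (t + h))
    (hA : ∀ t, A t = x t + ∫ s in (t - h)..t, b (s + h) * x s)
    (hV : ∀ t, V t = (A t) ^ 2 - D * ∫ s in (t - h)..t, (b (s + h)) ^ 2 * (x s) ^ 2)
    -- the condition D·b(t+h)² ≤ Q(t)
    (hcond : ∀ t, t0 ≤ t → D * (b (t + h)) ^ 2 ≤ Q t) :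
    ∀ t, t0 ≤ t → ∃ d, HasDerivWithinAt V d (Set.Ici t0) t ∧ Q t * V t ≤ d :=
  stmt18_general t0 h D hh hhD a b x hb hxc hx Q A V hQ hA hV hcond
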